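/- The regularized least-squares objective Q ↦ (1/2)·Σ_{x∈X} d_β(x)·(Q(x) − y(x))² + λ·( Σ_{x∈X} ω(x)·Q(x) − Σ_{x∈X} d(x)·Q(x) ) over functions Q : X → ℝ has the unique minimizer Q*(x) = y(x) − λ·(ω(x) − d(x))/d_β(x) for all x ∈ X. -/

import Mathlib

open Finset

noncomputable section

/-- The regularized least-squares objective
`Q ↦ (1/2) ∑_x d_β(x) (Q(x) − y(x))² + λ (∑_x ω(x) Q(x) − ∑_x d(x) Q(x))`. -/
def regLSObjective {X : Type*} [Fintype X] (dβ y ω d : X → ℝ) (lam : ℝ) (Q : X → ℝ) : ℝ :=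
  (1 / 2) * ∑ x : X, dβ x * (Q x - y x) ^ 2
    + lam * (∑ x : X, ω x * Q x - ∑ x : X, d x * Q x)

/-! The objective is a separable quadratic in `Q` with Hessian `diag d_β`; completing the square
at `Q*` writes it as its value at `Q*` plus `(1/2) ∑ d_β (Q − Q*)²`, and positivity of `d_β`
makes that excess vanish only at `Q = Q*`. -/

def regLSMinimizer {X : Type*} (dβ y ω d : X → ℝ) (lam : ℝ) : X → ℝ :=
  fun x => y x - lam * (ω x - d x) / dβ x

theorem regLSObjective_eq_minimizer_add {X : Type*} [Fintype X] {dβ : X → ℝ}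
    (hdβ : ∀ x, dβ x ≠ 0) (y ω d : X → ℝ) (lam : ℝ) (Q : X → ℝ) :
    regLSObjective dβ y ω d lam Q =
      regLSObjective dβ y ω d lam (regLSMinimizer dβ y ω d lam)
        + (1 / 2) * ∑ x : X, dβ x * (Q x - regLSMinimizer dβ y ω d lam x) ^ 2 := by
  simp only [regLSObjective, regLSMinimizer, mul_sum, ← sum_sub_distrib, ← sum_add_distrib]
  refine sum_congr rfl fun x _ => ?_
  have := hdβ x
  field_simp
  ring

theorem Finset.sum_mul_sq_eq_zero_iff {ι : Type*} {s : Finset ι} {w : ι → ℝ}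
    (hw : ∀ i ∈ s, 0 < w i) (f : ι → ℝ) :
    ∑ i ∈ s, w i * f i ^ 2 = 0 ↔ ∀ i ∈ s, f i = 0 := by
  rw [sum_eq_zero_iff_of_nonneg fun i hi => mul_nonneg (hw i hi).le (sq_nonneg _)]
  refine forall₂_congr fun i hi => ?_
  simp [(hw i hi).ne']

theorem regLS_minimizer_general {X : Type*} [Fintype X]
    (dβ : X → ℝ) (hdβ : ∀ x, 0 < dβ x)
    (y ω d : X → ℝ) (lam : ℝ) :
    (∀ Q : X → ℝ,
        regLSObjective dβ y ω d lam (fun x => y x - lam * (ω x - d x) / dβ x) ≤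
          regLSObjective dβ y ω d lam Q)
    ∧ ∀ Q : X → ℝ,
        regLSObjective dβ y ω d lam Q =
          regLSObjective dβ y ω d lam (fun x => y x - lam * (ω x - d x) / dβ x) →
        Q = fun x => y x - lam * (ω x - d x) / dβ x := by
  rw [show (fun x => y x - lam * (ω x - d x) / dβ x) = regLSMinimizer dβ y ω d lam from rfl]
  have hsplit := regLSObjective_eq_minimizer_add (fun x => (hdβ x).ne') y ω d lam
  refine ⟨fun Q => ?_, fun Q hQ => ?_⟩
  · have hexcess : 0 ≤ ∑ x : X, dβ x * (Q x - regLSMinimizer dβ y ω d lam x) ^ 2 :=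
      sum_nonneg fun x _ => mul_nonneg (hdβ x).le (sq_nonneg _)
    linarith [hsplit Q]
  · have hexcess : ∑ x : X, dβ x * (Q x - regLSMinimizer dβ y ω d lam x) ^ 2 = 0 := by
      linarith [hsplit Q]
    rw [sum_mul_sq_eq_zero_iff (fun x _ => hdβ x)] at hexcess
    funext x
    exact sub_eq_zero.mp (hexcess x (mem_univ x))

/-- the regularized least-squares objective has the unique minimizer
`Q*(x) = y(x) − λ (ω(x) − d(x)) / d_β(x)`. -/
theorem regLS_minimizer {X : Type*} [Fintype X] [Nonempty X]
    (dβ : X → ℝ) (hdβ : ∀ x, 0 < dβ x)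
    (y ω d : X → ℝ) (hω : ∀ x, 0 ≤ ω x) (hd : ∀ x, 0 ≤ d x) (lam : ℝ) :
    (∀ Q : X → ℝ,
        regLSObjective dβ y ω d lam (fun x => y x - lam * (ω x - d x) / dβ x) ≤
          regLSObjective dβ y ω d lam Q)
    ∧ ∀ Q : X → ℝ,
        regLSObjective dβ y ω d lam Q =
          regLSObjective dβ y ω d lam (fun x => y x - lam * (ω x - d x) / dβ x) →
        Q = fun x => y x - lam * (ω x - d x) / dβ x :=
  regLS_minimizer_general dβ hdβ y ω d lam
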